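/- arXiv:2303.02369 — 3 statements merged into one kernel-verified Lean document; each statement's English description precedes it below -/
import Mathlib

section
/- The metric space (C_p(n) ∪ {0}, δ^V) is the completion of (C_p(n), δ^V), where 0 is an added point with δ^V(P, 0) = Vol(P) for every proper convex body P. Concretely: every Cauchy sequence (P_m) in (C_p(n), δ^V) either satisfies Vol(P_m) → 0, or there exists a proper convex body Q ∈ C_p(n) with δ^V(P_m, Q) → 0. -/
/- Common definitions: polytopes, faces, Delzant polytopes, normal fans,
   the symmetric-difference and Hausdorff metrics, and the AGL(n,ℤ) action. -/

open Set MeasureTheory Metric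
open scoped Pointwise

noncomputable section

/-- Euclidean `n`-space `ℝⁿ`. -/
abbrev Euc (n : ℕ) := EuclideanSpace ℝ (Fin n)

/-- The standard pairing (inner product), used to identify `ℝⁿ` with its dual. -/
def dotE {n : ℕ} (α x : Euc n) : ℝ := ∑ i, α i * x i

/-- The face of `P` in the direction `α`: the set of points of `P` maximizing `⟨α, ·⟩`. -/
def faceInDir {n : ℕ} (P : Set (Euc n)) (α : Euc n) : Set (Euc n) :=
  {p ∈ P | ∀ q ∈ P, dotE α q ≤ dotE α p}

/-- `F` is a face of `P` (for `α = 0` this gives `P` itself). -/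
def IsFaceOf {n : ℕ} (P F : Set (Euc n)) : Prop := ∃ α, F = faceInDir P α

/-- The (affine) dimension of a subset of `ℝⁿ`. -/
def setDim {n : ℕ} (F : Set (Euc n)) : ℕ := Module.finrank ℝ (affineSpan ℝ F).direction

/-- A convex polytope: the convex hull of a finite set of points. -/
def IsPolytope {n : ℕ} (P : Set (Euc n)) : Prop := ∃ S : Finset (Euc n), P = convexHull ℝ ↑S

/-- The real vector associated to an integer vector. -/
def intVec {n : ℕ} (v : Fin n → ℤ) : Euc n := WithLp.toLp 2 (fun i => (v i : ℝ))

/-- An integer vector is primitive if its entries are relatively prime. -/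
def IsPrimitive {n : ℕ} (v : Fin n → ℤ) : Prop := Finset.univ.gcd v = 1

/-- A vector of `ℝⁿ` is rational if all its coordinates are rational. -/
def IsRatVec {n : ℕ} (v : Euc n) : Prop := ∀ i, ∃ q : ℚ, v i = (q : ℝ)

/-- `v` is a vertex of `P`: the singleton `{v}` is a (0-dimensional) face. -/
def IsVertexOf {n : ℕ} (P : Set (Euc n)) (v : Euc n) : Prop := IsFaceOf P {v}

/-- An edge of `P` is a 1-dimensional face. -/
def IsEdgeOf {n : ℕ} (P : Set (Euc n)) (e : Set (Euc n)) : Prop := IsFaceOf P e ∧ setDim e = 1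

/-- A facet of `P ⊆ ℝⁿ` is an `(n-1)`-dimensional face. -/
def IsFacetOf {n : ℕ} (P : Set (Euc n)) (f : Set (Euc n)) : Prop := IsFaceOf P f ∧ setDim f = n - 1

/-- The vector `u` points along the edge `e` emanating from the vertex `v`. -/
def DirAlong {n : ℕ} (v : Euc n) (e : Set (Euc n)) (u : Euc n) : Prop :=
  ∃ p ∈ e, ∃ t : ℝ, 0 < t ∧ p = v + t • u

/-- A Delzant polytope in `ℝⁿ`: a full-dimensional polytope such that at every vertex there
are exactly `n` edges, and integer vectors pointing along these edges can be chosen forming a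
basis of `ℤⁿ` (i.e. with determinant `±1`; such vectors are automatically the primitive
edge-direction vectors).  This encodes simplicity, rationality of edge directions and the
smoothness condition simultaneously. -/
def IsDelzant {n : ℕ} (P : Set (Euc n)) : Prop :=
  IsPolytope P ∧ affineSpan ℝ P = ⊤ ∧
  ∀ v : Euc n, IsVertexOf P v →
    ∃ (u : Fin n → (Fin n → ℤ)) (e : Fin n → Set (Euc n)),
      Function.Injective e ∧
      (∀ i, IsEdgeOf P (e i) ∧ v ∈ e i ∧ DirAlong v (e i) (intVec (u i))) ∧
      (∀ e', IsEdgeOf P e' → v ∈ e' → ∃ i, e' = e i) ∧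
      ((Matrix.of u).det = 1 ∨ (Matrix.of u).det = -1)

/-- The normal cone of a face `F` of `P`. -/
def normalCone {n : ℕ} (P F : Set (Euc n)) : Set (Euc n) :=
  {α | ∀ p ∈ F, ∀ q ∈ P, dotE α q ≤ dotE α p}

/-- The normal fan of `P`, as the collection of normal cones of its (nonempty) faces. -/
def normalFan {n : ℕ} (P : Set (Euc n)) : Set (Set (Euc n)) :=
  {C | ∃ F, IsFaceOf P F ∧ F.Nonempty ∧ C = normalCone P F}

/-- A collection of cones `A` refines `B` if every member of `A` is contained in a member
of `B`. -/
def RefinesFan {n : ℕ} (A B : Set (Set (Euc n))) : Prop :=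
  ∀ C ∈ A, ∃ C' ∈ B, C ⊆ C'

/-- The symmetric-difference (volume) distance `δ^V`. -/
def deltaV {n : ℕ} (P Q : Set (Euc n)) : ℝ :=
  (volume (P \ Q)).toReal + (volume (Q \ P)).toReal

/-- A proper convex body: a compact convex set with nonempty interior. -/
def IsProperBody {n : ℕ} (P : Set (Euc n)) : Prop :=
  P.Nonempty ∧ IsCompact P ∧ Convex ℝ P ∧ (interior P).Nonempty

/-- The affine map `x ↦ Ax + c` on `ℝⁿ` determined by an integer matrix `A` and `c ∈ ℝⁿ`. -/
def aglMap {n : ℕ} (A : Matrix (Fin n) (Fin n) ℤ) (c : Euc n) : Euc n → Euc n :=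
  fun x => WithLp.toLp 2 (fun i => (∑ j, (A i j : ℝ) * x j) + c i)

/-- `A ∈ GL(n,ℤ)`, i.e. `A` is an integer matrix with determinant `±1`. -/
def IsAGLZ {n : ℕ} (A : Matrix (Fin n) (Fin n) ℤ) : Prop := A.det = 1 ∨ A.det = -1

/-- `Q` lies in the `AGL(n,ℤ)`-orbit of `P`. -/
def inOrbit {n : ℕ} (P Q : Set (Euc n)) : Prop :=
  ∃ A c, IsAGLZ A ∧ Q = aglMap A c '' P

/-- The induced distance `δ̃^V` between `AGL(n,ℤ)`-orbits (evaluated on representatives). -/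
def deltaVOrbit {n : ℕ} (P Q : Set (Euc n)) : ℝ :=
  sInf {d | ∃ P' Q', inOrbit P P' ∧ inOrbit Q Q' ∧ d = deltaV P' Q'}

/-! A `δ^V`-Cauchy sequence has a subsequence `S` with `∑ Vol (S k ∆ S (k + 1)) < ∞`, and the
set `L` of points lying in all but finitely many `S k` is then a `δ^V`-limit of the whole
sequence. `L` is convex, and so is its closure `Q`, which differs from `L` by part of the
frontier of `L`, a null set. If `Vol Q = 0` the volumes tend to `0`. Otherwise the convex set `Q`
has interior points, and a convex set containing a ball `B(x, r)` and a point `y` contains about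
`dist y x / 2r` disjoint balls of radius `r / 2`, so finite volume forces `Q` to be bounded,
hence compact. -/

open Filter
open scoped ENNReal symmDiff Topology

lemma symmDiff_liminf_subset_iUnion {α : Type*} (S : ℕ → Set α) (k : ℕ) :
    S k ∆ liminf S atTop ⊆ ⋃ i, S (k + i) ∆ S (k + i + 1) := by
  intro x hx
  by_contra hx'
  -- off the union, membership in `S j` does not change for `j ≥ k`
  simp only [mem_iUnion, not_exists, mem_symmDiff, not_or, not_and, not_not] at hx'
  have hconst : ∀ i, x ∈ S (k + i) ↔ x ∈ S k := by
    intro i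
    induction i with
    | zero => rfl
    | succ i ih => exact ⟨fun h => ih.1 ((hx' i).2 h), fun h => (hx' i).1 (ih.2 h)⟩
  have heventually : (∀ᶠ j in atTop, x ∈ S j) ↔ x ∈ S k := by
    refine ⟨fun h => ?_, fun h => eventually_atTop.2 ⟨k, fun j hj => ?_⟩⟩
    · obtain ⟨j, hjx, hj⟩ := (h.and (eventually_ge_atTop k)).exists
      exact (hconst (j - k)).1 (by rwa [Nat.add_sub_cancel' hj])
    · simpa only [Nat.add_sub_cancel' hj] using (hconst (j - k)).2 h
  rw [mem_symmDiff, mem_liminf_iff_eventually_mem, heventually] at hx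
  tauto

section MeasureSymmDiff

variable {α : Type*} [MeasurableSpace α] {μ : Measure α}

lemma measure_le_add_measure_symmDiff (s t : Set α) : μ t ≤ μ s + μ (s ∆ t) := by
  rw [← tsub_le_iff_left, symmDiff_comm]
  exact le_measure_symmDiff

lemma measure_symmDiff_liminf_le_tsum (S : ℕ → Set α) (k : ℕ) :
    μ (S k ∆ liminf S atTop) ≤ ∑' i, μ (S (k + i) ∆ S (k + i + 1)) :=
  (measure_mono (symmDiff_liminf_subset_iUnion S k)).trans (measure_iUnion_le _)

lemma measure_symmDiff_liminf_le_of_le_geometric (S : ℕ → Set α)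
    (hS : ∀ k, μ (S k ∆ S (k + 1)) ≤ 2⁻¹ ^ k) (k : ℕ) :
    μ (S k ∆ liminf S atTop) ≤ 2 * 2⁻¹ ^ k :=
  calc μ (S k ∆ liminf S atTop) ≤ ∑' i, μ (S (k + i) ∆ S (k + i + 1)) :=
        measure_symmDiff_liminf_le_tsum S k
    _ ≤ ∑' i, (2⁻¹ : ℝ≥0∞) ^ k * 2⁻¹ ^ i :=
        ENNReal.tsum_le_tsum fun i => (hS _).trans_eq (pow_add _ _ _)
    _ = 2 * 2⁻¹ ^ k := by
        rw [ENNReal.tsum_mul_left, ENNReal.tsum_geometric, ENNReal.one_sub_inv_two, inv_inv,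
          mul_comm]

lemma exists_tendsto_measure_symmDiff_liminf {S : ℕ → Set α}
    (hS : ∀ ε > 0, ∃ N, ∀ m ≥ N, ∀ m' ≥ N, μ (S m ∆ S m') < ε) :
    ∃ φ : ℕ → ℕ, Tendsto (fun m => μ (S m ∆ liminf (S ∘ φ) atTop)) atTop (𝓝 0) := by
  obtain ⟨φ, hφ, hφS⟩ := extraction_forall_of_eventually'
    (P := fun k j => ∀ m ≥ j, μ (S m ∆ S j) < (2⁻¹ : ℝ≥0∞) ^ k) fun k => by
      obtain ⟨N, hN⟩ := hS _ <|
        ENNReal.pow_pos (ENNReal.inv_pos.2 (ENNReal.ofNat_ne_top (n := 2))) k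
      exact ⟨N, fun j hj m hm => hN m (hj.trans hm) j hj⟩
  set L := liminf (S ∘ φ) atTop
  have hL : ∀ k, μ (S (φ k) ∆ L) ≤ 2 * 2⁻¹ ^ k :=
    measure_symmDiff_liminf_le_of_le_geometric (S ∘ φ) fun k => by
      rw [Function.comp_apply, Function.comp_apply, symmDiff_comm]
      exact (hφS k _ (hφ k.lt_succ_self).le).le
  have hbound : ∀ k, ∀ m ≥ φ k, μ (S m ∆ L) ≤ 3 * 2⁻¹ ^ k := fun k m hm =>
    calc μ (S m ∆ L) ≤ μ (S m ∆ S (φ k)) + μ (S (φ k) ∆ L) := measure_symmDiff_le _ _ _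
      _ ≤ 2⁻¹ ^ k + 2 * 2⁻¹ ^ k := add_le_add (hφS k m hm).le (hL k)
      _ = 3 * 2⁻¹ ^ k := by ring
  have hgeom : Tendsto (fun k => 3 * (2⁻¹ : ℝ≥0∞) ^ k) atTop (𝓝 0) := by
    simpa using ENNReal.Tendsto.const_mul
      (ENNReal.tendsto_pow_atTop_nhds_zero_of_lt_one (by norm_num)) (Or.inr ENNReal.ofNat_ne_top)
  refine ⟨φ, ENNReal.tendsto_atTop_zero.2 fun ε hε => ?_⟩
  obtain ⟨k, hk⟩ := (hgeom.eventually (ge_mem_nhds hε)).exists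
  exact ⟨φ k, fun m hm => (hbound k m hm).trans hk⟩

end MeasureSymmDiff

lemma Convex.liminf {𝕜 E ι : Type*} [Semiring 𝕜] [PartialOrder 𝕜] [AddCommMonoid E]
    [Module 𝕜 E] {l : Filter ι} {S : ι → Set E} (hS : ∀ i, Convex 𝕜 (S i)) :
    Convex 𝕜 (liminf S l) := by
  intro x hx y hy a b ha hb hab
  rw [mem_liminf_iff_eventually_mem] at hx hy ⊢
  filter_upwards [hx, hy] with i hxi hyi using hS i hxi hyi ha hb hab

section ConvexMeasure

variable {E : Type*} [NormedAddCommGroup E] [NormedSpace ℝ E] {s : Set E} {x y : E} {r : ℝ}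

lemma Convex.ball_add_smul_sub_subset (hs : Convex ℝ s) (hball : ball x r ⊆ s) (hy : y ∈ s)
    {t : ℝ} (ht₀ : 0 ≤ t) (ht₁ : t < 1) : ball (x + t • (y - x)) ((1 - t) * r) ⊆ s := by
  intro z hz
  have ht : 0 < 1 - t := sub_pos.2 ht₁
  set w := x + (1 - t)⁻¹ • (z - (x + t • (y - x)))
  have hw : w ∈ ball x r := by
    rw [mem_ball, dist_eq_norm, add_sub_cancel_left, norm_smul, Real.norm_eq_abs,
      abs_inv, abs_of_pos ht, inv_mul_lt_iff₀ ht, ← dist_eq_norm]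
    exact hz
  have hzw : z = (1 - t) • w + t • y := by
    simp only [w, smul_add, smul_smul, mul_inv_cancel₀ ht.ne', one_smul]
    module
  exact hzw ▸ hs (hball hw) hy ht.le ht₀ (by ring)

variable [MeasurableSpace E] [BorelSpace E] (μ : Measure E) [μ.IsAddHaarMeasure]

/-- The balls of radius `r / 2` centred at the points of the segment from `x` to `y` at
distances `0, r, 2r, …` from `x` lie in `s` and are disjoint. -/
lemma Convex.natCast_mul_measure_ball_le (hs : Convex ℝ s) (hr : 0 < r) (hball : ball x r ⊆ s)
    (hy : y ∈ s) (K : ℕ) (hK : 2 * K * r ≤ dist y x) : K * μ (ball x (r / 2)) ≤ μ s := by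
  rcases K.eq_zero_or_pos with rfl | hKpos
  · simp
  set R := dist y x
  have hR : 0 < R := lt_of_lt_of_le (by positivity) hK
  set c : ℕ → E := fun j => x + (j * r / R) • (y - x)
  have hsub : ∀ j < K, ball (c j) (r / 2) ⊆ s := by
    intro j hj
    have hjK : (j : ℝ) + 1 ≤ K := by exact_mod_cast hj
    have ht : j * r / R ≤ 1 / 2 := by
      rw [div_le_iff₀ hR]
      nlinarith
    refine (ball_subset_ball ?_).trans
      (hs.ball_add_smul_sub_subset hball hy (by positivity) (by linarith))
    nlinarith
  have hdisj : (Finset.range K : Set ℕ).PairwiseDisjoint fun j => ball (c j) (r / 2) := by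
    intro i _ j _ hij
    refine ball_disjoint_ball ?_
    have hdist : dist (c i) (c j) = |(i : ℝ) - j| * r := by
      rw [dist_eq_norm, show c i - c j = ((i - j) * r / R) • (y - x) by simp only [c]; module,
        norm_smul, ← dist_eq_norm, Real.norm_eq_abs, abs_div, abs_mul, abs_of_pos hr,
        abs_of_pos hR, div_mul_cancel₀ _ hR.ne']
    have hij' : (1 : ℝ) ≤ |(i : ℝ) - j| := by
      exact_mod_cast Int.one_le_abs (sub_ne_zero.2 (Int.natCast_inj.not.2 hij))
    rw [hdist]
    nlinarith
  calc (K : ℝ≥0∞) * μ (ball x (r / 2))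
      = ∑ j ∈ Finset.range K, μ (ball (c j) (r / 2)) := by
        simp [Measure.addHaar_ball_center μ (c _), Measure.addHaar_ball_center μ x]
    _ = μ (⋃ j ∈ Finset.range K, ball (c j) (r / 2)) :=
        (measure_biUnion_finset hdisj fun _ _ => measurableSet_ball).symm
    _ ≤ μ s := measure_mono (iUnion₂_subset fun j hj => hsub j (Finset.mem_range.1 hj))

variable {μ}

lemma Convex.isBounded_of_measure_ne_top (hs : Convex ℝ s) (hint : (interior s).Nonempty)
    (hfin : μ s ≠ ∞) : Bornology.IsBounded s := by
  obtain ⟨x, hx⟩ := hint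
  obtain ⟨r, hr, hball⟩ := Metric.isOpen_iff.1 isOpen_interior x hx
  obtain ⟨K, hK⟩ : ∃ K : ℕ, μ s < K * μ (ball x (r / 2)) :=
    ENNReal.exists_nat_mul_gt (measure_ball_pos μ x (half_pos hr)).ne' hfin
  refine (isBounded_iff_subset_closedBall x).2 ⟨2 * K * r, fun y hy => ?_⟩
  by_contra hy'
  rw [mem_closedBall, not_le] at hy'
  exact (hK.trans_le (hs.natCast_mul_measure_ball_le μ hr (hball.trans interior_subset) hy K
    hy'.le)).false

variable [FiniteDimensional ℝ E]

lemma Convex.interior_nonempty_of_measure_ne_zero (hs : Convex ℝ s) (h : μ s ≠ 0) :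
    (interior s).Nonempty :=
  nonempty_of_measure_ne_zero <| by
    rwa [measure_interior_of_null_frontier (hs.addHaar_frontier μ)]

variable (μ) in
theorem exists_isClosed_convex_tendsto_measure_symmDiff {S : ℕ → Set E}
    (hconv : ∀ m, Convex ℝ (S m))
    (hS : ∀ ε > 0, ∃ N, ∀ m ≥ N, ∀ m' ≥ N, μ (S m ∆ S m') < ε) :
    ∃ Q, IsClosed Q ∧ Convex ℝ Q ∧ Tendsto (fun m => μ (S m ∆ Q)) atTop (𝓝 0) := by
  obtain ⟨φ, hφ⟩ := exists_tendsto_measure_symmDiff_liminf hS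
  have hL : Convex ℝ (liminf (S ∘ φ) atTop) := Convex.liminf fun k => hconv (φ k)
  refine ⟨_, isClosed_closure, hL.closure, ?_⟩
  have hae := closure_ae_eq_of_null_frontier (hL.addHaar_frontier μ)
  simpa only [measure_congr ((EventuallyEq.refl _ (S _)).symmDiff hae)] using hφ

end ConvexMeasure

section DeltaV

variable {n : ℕ}

lemma measure_symmDiff_le_ofReal_deltaV {P Q : Set (Euc n)} (hP : volume P ≠ ∞)
    (hQ : volume Q ≠ ∞) : volume (P ∆ Q) ≤ ENNReal.ofReal (deltaV P Q) := by
  rw [deltaV, ENNReal.ofReal_add ENNReal.toReal_nonneg ENNReal.toReal_nonneg,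
    ENNReal.ofReal_toReal (measure_ne_top_of_subset sdiff_subset hP),
    ENNReal.ofReal_toReal (measure_ne_top_of_subset sdiff_subset hQ)]
  exact measure_union_le _ _

lemma deltaV_le_two_mul_toReal_measure_symmDiff {P Q : Set (Euc n)}
    (h : volume (P ∆ Q) ≠ ∞) : deltaV P Q ≤ 2 * (volume (P ∆ Q)).toReal := by
  have hPQ : (volume (P \ Q)).toReal ≤ (volume (P ∆ Q)).toReal :=
    ENNReal.toReal_mono h (measure_mono le_sup_left)
  have hQP : (volume (Q \ P)).toReal ≤ (volume (P ∆ Q)).toReal :=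
    ENNReal.toReal_mono h (measure_mono le_sup_right)
  rw [deltaV]
  linarith

lemma cauchy_measure_symmDiff_of_cauchy_deltaV {P : ℕ → Set (Euc n)}
    (hfin : ∀ m, volume (P m) ≠ ∞)
    (hP : ∀ ε > (0 : ℝ), ∃ N, ∀ m ≥ N, ∀ m' ≥ N, deltaV (P m) (P m') < ε) :
    ∀ ε > (0 : ℝ≥0∞), ∃ N, ∀ m ≥ N, ∀ m' ≥ N, volume (P m ∆ P m') < ε := by
  intro ε hε
  obtain ⟨δ, -, hδ, hδε⟩ := ENNReal.lt_iff_exists_real_btwn.1 hε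
  obtain ⟨N, hN⟩ := hP δ (ENNReal.ofReal_pos.1 hδ)
  refine ⟨N, fun m hm m' hm' => lt_of_le_of_lt ?_ hδε⟩
  exact (measure_symmDiff_le_ofReal_deltaV (hfin m) (hfin m')).trans
    (ENNReal.ofReal_le_ofReal (hN m hm m' hm').le)

lemma tendsto_deltaV_of_tendsto_measure_symmDiff {P : ℕ → Set (Euc n)} {Q : Set (Euc n)}
    (h : Tendsto (fun m => volume (P m ∆ Q)) atTop (𝓝 0)) :
    Tendsto (fun m => deltaV (P m) Q) atTop (𝓝 0) := by
  have hreal : Tendsto (fun m => 2 * (volume (P m ∆ Q)).toReal) atTop (𝓝 0) := by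
    simpa using ((ENNReal.tendsto_toReal ENNReal.zero_ne_top).comp h).const_mul 2
  refine squeeze_zero'
    (.of_forall fun m => add_nonneg ENNReal.toReal_nonneg ENNReal.toReal_nonneg) ?_ hreal
  filter_upwards [h.eventually (gt_mem_nhds ENNReal.zero_lt_top)] with m hm
  exact deltaV_le_two_mul_toReal_measure_symmDiff hm.ne

lemma isProperBody_of_isClosed_of_convex {Q : Set (Euc n)} (hc : IsClosed Q)
    (hconv : Convex ℝ Q) (h0 : volume Q ≠ 0) (htop : volume Q ≠ ∞) : IsProperBody Q := by
  have hint := hconv.interior_nonempty_of_measure_ne_zero h0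
  exact ⟨hint.mono interior_subset,
    Metric.isCompact_of_isClosed_isBounded hc (hconv.isBounded_of_measure_ne_top hint htop),
    hconv, hint⟩

end DeltaV

/-- `(C_p(n) ∪ {0}, δ^V)` is the completion of `(C_p(n), δ^V)`: every Cauchy
sequence `(P_m)` of proper convex bodies with respect to `δ^V` either has volume tending to
`0` (i.e. converges to the added point `0`), or converges in `δ^V` to some proper convex
body `Q`. -/
theorem delzant_stmt_4 {n : ℕ} (P : ℕ → Set (Euc n)) (hP : ∀ m, IsProperBody (P m))
    (hCauchy : ∀ ε > (0 : ℝ), ∃ N, ∀ m ≥ N, ∀ m' ≥ N, deltaV (P m) (P m') < ε) :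
    (Filter.Tendsto (fun m => (volume (P m)).toReal) Filter.atTop (nhds 0)) ∨
    (∃ Q : Set (Euc n), IsProperBody Q ∧
      Filter.Tendsto (fun m => deltaV (P m) Q) Filter.atTop (nhds 0)) := by
  have hfin : ∀ m, volume (P m) ≠ ∞ := fun m => (hP m).2.1.measure_lt_top.ne
  obtain ⟨Q, hQc, hQconv, hQ⟩ := exists_isClosed_convex_tendsto_measure_symmDiff volume
    (fun m => (hP m).2.2.1) (cauchy_measure_symmDiff_of_cauchy_deltaV hfin hCauchy)
  by_cases hQ0 : volume Q = 0
  · left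
    have hvol : Tendsto (fun m => volume (P m)) atTop (𝓝 0) :=
      tendsto_of_tendsto_of_tendsto_of_le_of_le tendsto_const_nhds hQ (fun _ => bot_le)
        fun m => by
          simpa only [hQ0, zero_add, symmDiff_comm] using
            measure_le_add_measure_symmDiff (μ := volume) Q (P m)
    simpa only [Function.comp_def, ENNReal.toReal_zero] using
      (ENNReal.tendsto_toReal ENNReal.zero_ne_top).comp hvol
  · right
    obtain ⟨m, hm⟩ := (hQ.eventually (gt_mem_nhds ENNReal.zero_lt_top)).exists
    have hQfin : volume Q ≠ ∞ := ((measure_le_add_measure_symmDiff (P m) Q).trans_lt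
      (ENNReal.add_lt_top.2 ⟨(hfin m).lt_top, hm⟩)).ne
    exact ⟨Q, isProperBody_of_isClosed_of_convex hQc hQconv hQ0 hQfin,
      tendsto_deltaV_of_tendsto_measure_symmDiff hQ⟩
end
end

section
/- The function δ̃^V([P],[Q]) = inf{δ^V(P′, Q′) : P′ ∈ [P], Q′ ∈ [Q]} is a metric on the set of AGL(n,ℤ)-orbits of proper convex bodies in ℝⁿ: it is symmetric, satisfies the triangle inequality, vanishes on equal orbits, and is strictly positive on distinct orbits. -/
/- Common definitions: polytopes, faces, Delzant polytopes, normal fans,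
   the symmetric-difference and Hausdorff metrics, and the AGL(n,ℤ) action. -/

open Set MeasureTheory Metric
open scoped Pointwise

noncomputable section

/-!
`AGL(n,ℤ)` acts by volume-preserving bijections, so `δ^V` is invariant under the simultaneous
action and the infimum defining `δ̃^V([P],[Q])` may be taken with `P` fixed; symmetry and the
triangle inequality are then inherited from `δ^V`.

For positivity, let `δ^V(P, g_k Q) → 0`. If the convex body `g_k Q` had a point `x` far from `P`,
the homothety of ratio `1/4` centred at `x` would map `g_k Q ∩ P` into `g_k Q \ P`, so
`Vol(g_k Q \ P) ≥ 4⁻ⁿ Vol(g_k Q ∩ P)`; hence eventually every `g_k Q` lies in a fixed ball. As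
`Q` contains a ball, this bounds the integer matrices of the `g_k` (finitely many remain) and
their translation parts. A subsequence converges to some `g`, and since `δ^V(P, ·)` is
continuous under translations, `δ^V(P, g Q) = 0`. Convex bodies are the closures of their
interiors, so two of them whose differences are null coincide: `P = g Q`.
-/

open Filter Topology
open scoped symmDiff

theorem tendsto_measure_preimage_add_right_symmDiff {G : Type*} [TopologicalSpace G]
    [AddGroup G] [IsTopologicalAddGroup G] [MeasurableSpace G] [BorelSpace G] {μ : Measure G}
    [μ.InnerRegularCompactLTTop] [IsLocallyFiniteMeasure μ] [μ.IsAddRightInvariant]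
    {s : Set G} (hs : NullMeasurableSet s μ) (hμs : μ s ≠ ⊤) :
    Tendsto (fun t => μ (((fun x => x + t) ⁻¹' s) ∆ s)) (𝓝 0) (𝓝 0) := by
  have hcont : Continuous fun t : G => ContinuousMap.addRight t :=
    (ContinuousMap.curry ⟨fun p : G × G => p.2 + p.1, by fun_prop⟩).continuous
  simpa using tendsto_measure_symmDiff_preimage_nhds_zero (hcont.tendsto 0)
    (Eventually.of_forall fun t => measurePreserving_add_right μ t)
    (measurePreserving_add_right μ 0) hs hμs

theorem subset_of_measure_diff_eq_zero {X : Type*} [TopologicalSpace X] [MeasurableSpace X]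
    {μ : Measure X} [μ.IsOpenPosMeasure] {s t : Set X} (hs : s ⊆ closure (interior s))
    (ht : IsClosed t) (h : μ (s \ t) = 0) : s ⊆ t := by
  have hempty : interior s \ t = ∅ :=
    (isOpen_interior.sdiff ht).measure_eq_zero_iff μ |>.mp <|
      measure_mono_null (sdiff_subset_sdiff_left interior_subset) h
  exact hs.trans (closure_minimal (sdiff_eq_empty.mp hempty) ht)

theorem toReal_measure_diff_le_add {X : Type*} [MeasurableSpace X] {μ : Measure X}
    {s t u : Set X} (hs : μ s ≠ ⊤) (ht : μ t ≠ ⊤) :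
    (μ (s \ u)).toReal ≤ (μ (s \ t)).toReal + (μ (t \ u)).toReal :=
  ENNReal.toReal_le_add ((measure_mono (sdiff_triangle s t u)).trans (measure_union_le _ _))
    (measure_ne_top_of_subset sdiff_subset hs) (measure_ne_top_of_subset sdiff_subset ht)

theorem ofReal_mul_measure_inter_le_measure_diff {E : Type*} [NormedAddCommGroup E]
    [NormedSpace ℝ E] [FiniteDimensional ℝ E] [MeasurableSpace E] [BorelSpace E]
    (μ : Measure E) [μ.IsAddHaarMeasure] {K P : Set E} {D : ℝ} {x : E} (hK : Convex ℝ K)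
    (hx : x ∈ K) (hPD : P ⊆ closedBall 0 D) (hxD : 2 * D < ‖x‖) :
    ENNReal.ofReal ((4 : ℝ)⁻¹ ^ Module.finrank ℝ E) * μ (K ∩ P) ≤ μ (K \ P) := by
  set hom : E → E := fun s => (4 : ℝ)⁻¹ • s + (3 / 4 : ℝ) • x
  have hmaps : hom '' (K ∩ P) ⊆ K \ P := by
    rintro _ ⟨s, ⟨hsK, hsP⟩, rfl⟩
    refine ⟨hK hsK hx (by norm_num) (by norm_num) (by norm_num), fun hyP => ?_⟩
    have hs : ‖s‖ ≤ D := mem_closedBall_zero_iff.mp (hPD hsP)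
    have hy : ‖hom s‖ ≤ D := mem_closedBall_zero_iff.mp (hPD hyP)
    have hx' : ‖(3 / 4 : ℝ) • x‖ ≤ ‖hom s‖ + ‖(4 : ℝ)⁻¹ • s‖ := by
      simpa [hom] using norm_sub_le (hom s) ((4 : ℝ)⁻¹ • s)
    rw [norm_smul, norm_smul] at hx'
    norm_num at hx'
    linarith [norm_nonneg s]
  have hvol : μ (hom '' (K ∩ P)) =
      ENNReal.ofReal ((4 : ℝ)⁻¹ ^ Module.finrank ℝ E) * μ (K ∩ P) := by
    have : hom '' (K ∩ P) = (fun y => y + (3 / 4 : ℝ) • x) '' ((4 : ℝ)⁻¹ • (K ∩ P)) := by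
      rw [← image_smul, image_image]
    rw [this, image_add_right, measure_preimage_add_right, Measure.addHaar_smul,
      abs_of_nonneg (by norm_num)]
  exact hvol ▸ measure_mono hmaps

theorem Matrix.finite_setOf_forall_abs_le {m m' : Type*} [Fintype m] [Fintype m'] (B : ℝ) :
    {A : Matrix m m' ℤ | ∀ i j, |(A i j : ℝ)| ≤ B}.Finite := by
  refine (Set.Finite.pi fun _ => Set.Finite.pi fun _ => finite_Icc (-⌈B⌉) ⌈B⌉).subset ?_
  intro A hA i _ j _
  have : |A i j| ≤ ⌈B⌉ := by
    exact_mod_cast (Int.cast_abs (R := ℝ) ▸ hA i j).trans (Int.le_ceil B)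
  exact abs_le.mp this

section AGL

variable {n : ℕ}

def aglLin (A : Matrix (Fin n) (Fin n) ℤ) : Euc n →ₗ[ℝ] Euc n :=
  Matrix.toEuclideanLin ((Int.castRingHom ℝ).mapMatrix A)

theorem aglMap_eq (A : Matrix (Fin n) (Fin n) ℤ) (c : Euc n) :
    aglMap A c = fun x => aglLin A x + c :=
  rfl

theorem aglLin_mul (A B : Matrix (Fin n) (Fin n) ℤ) :
    aglLin (A * B) = aglLin A ∘ₗ aglLin B := by
  rw [aglLin, map_mul]
  exact Matrix.toLpLin_mul_same _ _ _

theorem aglLin_one : aglLin (1 : Matrix (Fin n) (Fin n) ℤ) = LinearMap.id := by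
  simp [aglLin]

theorem det_aglLin (A : Matrix (Fin n) (Fin n) ℤ) : LinearMap.det (aglLin A) = A.det := by
  rw [aglLin, Matrix.toEuclideanLin_eq_toLin_orthonormal, LinearMap.det_toLin,
    ← RingHom.map_det]
  rfl

theorem aglMap_comp_aglMap (A B : Matrix (Fin n) (Fin n) ℤ) (c d : Euc n) :
    aglMap A c ∘ aglMap B d = aglMap (A * B) (aglMap A c d) := by
  ext1 x
  simp only [aglMap_eq, Function.comp_apply, aglLin_mul, map_add, LinearMap.comp_apply]
  abel

theorem aglMap_one_zero : aglMap (1 : Matrix (Fin n) (Fin n) ℤ) 0 = id := by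
  ext1 x
  simp [aglMap_eq, aglLin_one]

theorem isAGLZ_iff_isUnit_det {A : Matrix (Fin n) (Fin n) ℤ} : IsAGLZ A ↔ IsUnit A.det :=
  Int.isUnit_iff.symm

theorem IsAGLZ.mul {A B : Matrix (Fin n) (Fin n) ℤ} (hA : IsAGLZ A) (hB : IsAGLZ B) :
    IsAGLZ (A * B) := by
  rw [isAGLZ_iff_isUnit_det, Matrix.det_mul] at *
  exact hA.mul hB

theorem IsAGLZ.inv {A : Matrix (Fin n) (Fin n) ℤ} (hA : IsAGLZ A) : IsAGLZ A⁻¹ :=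
  isAGLZ_iff_isUnit_det.mpr (Matrix.isUnit_nonsing_inv_det A (isAGLZ_iff_isUnit_det.mp hA))

theorem IsAGLZ.leftInverse_aglMap_inv {A : Matrix (Fin n) (Fin n) ℤ} (hA : IsAGLZ A)
    (c : Euc n) : Function.LeftInverse (aglMap A⁻¹ (-aglLin A⁻¹ c)) (aglMap A c) := by
  intro x
  rw [← Function.comp_apply (f := aglMap A⁻¹ _), aglMap_comp_aglMap,
    Matrix.nonsing_inv_mul A (isAGLZ_iff_isUnit_det.mp hA)]
  simp [aglMap_eq, aglLin_one]

def IsAGLZ.toHomeomorph {A : Matrix (Fin n) (Fin n) ℤ} (hA : IsAGLZ A) (c : Euc n) :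
    Euc n ≃ₜ Euc n :=
  ((LinearMap.equivOfDetNeZero (aglLin A) (by rcases hA with h | h <;> simp [det_aglLin, h]))
    |>.toContinuousLinearEquiv.toHomeomorph).trans (Homeomorph.addRight c)

theorem IsAGLZ.coe_toHomeomorph {A : Matrix (Fin n) (Fin n) ℤ} (hA : IsAGLZ A) (c : Euc n) :
    ⇑(hA.toHomeomorph c) = aglMap A c :=
  rfl

theorem aglMap_image_eq (A : Matrix (Fin n) (Fin n) ℤ) (c : Euc n) (S : Set (Euc n)) :
    aglMap A c '' S = (fun y => y + c) '' (aglLin A '' S) :=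
  (image_image (fun y => y + c) (aglLin A) S).symm

theorem IsAGLZ.volume_aglMap_image {A : Matrix (Fin n) (Fin n) ℤ} (hA : IsAGLZ A) (c : Euc n)
    (S : Set (Euc n)) : volume (aglMap A c '' S) = volume S := by
  rw [aglMap_image_eq, image_add_right, measure_preimage_add_right,
    Measure.addHaar_image_linearMap, det_aglLin]
  rcases hA with h | h <;> simp [h]

end AGL

section Orbit

variable {n : ℕ}

theorem inOrbit_refl (P : Set (Euc n)) : inOrbit P P :=
  ⟨1, 0, Or.inl Matrix.det_one, by rw [aglMap_one_zero, image_id]⟩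

theorem inOrbit_symm {P Q : Set (Euc n)} (h : inOrbit P Q) : inOrbit Q P := by
  obtain ⟨A, c, hA, rfl⟩ := h
  exact ⟨A⁻¹, _, hA.inv, ((hA.leftInverse_aglMap_inv c).image_image P).symm⟩

theorem inOrbit_trans {P Q R : Set (Euc n)} (h₁ : inOrbit P Q) (h₂ : inOrbit Q R) :
    inOrbit P R := by
  obtain ⟨A, c, hA, rfl⟩ := h₁
  obtain ⟨B, d, hB, rfl⟩ := h₂
  exact ⟨B * A, aglMap B d c, hB.mul hA, by rw [image_image, ← aglMap_comp_aglMap]; rfl⟩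

theorem inOrbit.aglMap_image {P Q : Set (Euc n)} (h : inOrbit P Q)
    {A : Matrix (Fin n) (Fin n) ℤ} (hA : IsAGLZ A) (c : Euc n) :
    inOrbit P (aglMap A c '' Q) :=
  inOrbit_trans h ⟨A, c, hA, rfl⟩

theorem inOrbit.isCompact {P Q : Set (Euc n)} (h : inOrbit P Q) (hP : IsCompact P) :
    IsCompact Q := by
  obtain ⟨A, c, hA, rfl⟩ := h
  exact hP.image (hA.toHomeomorph c).continuous

theorem IsProperBody.subset_closure_interior {P : Set (Euc n)} (hP : IsProperBody P) :
    P ⊆ closure (interior P) := by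
  rw [hP.2.2.1.closure_interior_eq_closure_of_nonempty_interior hP.2.2.2]
  exact subset_closure

theorem IsProperBody.aglMap_image {P : Set (Euc n)} (hP : IsProperBody P)
    {A : Matrix (Fin n) (Fin n) ℤ} (hA : IsAGLZ A) (c : Euc n) :
    IsProperBody (aglMap A c '' P) := by
  obtain ⟨hne, hcpt, hconv, hint⟩ := hP
  refine ⟨hne.image _, hcpt.image (hA.toHomeomorph c).continuous, ?_, ?_⟩
  · simpa [aglMap_image_eq, add_comm] using (hconv.linear_image (aglLin A)).translate c
  · rw [← hA.coe_toHomeomorph, ← (hA.toHomeomorph c).image_interior]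
    exact hint.image _

end Orbit

section DeltaV

variable {n : ℕ}

theorem deltaV_nonneg (P Q : Set (Euc n)) : 0 ≤ deltaV P Q :=
  add_nonneg ENNReal.toReal_nonneg ENNReal.toReal_nonneg

theorem deltaV_comm (P Q : Set (Euc n)) : deltaV P Q = deltaV Q P :=
  add_comm _ _

theorem deltaV_self (P : Set (Euc n)) : deltaV P P = 0 := by
  simp [deltaV]

theorem deltaV_image_image {f : Euc n → Euc n} (hf : Function.Injective f)
    (hvol : ∀ S, volume (f '' S) = volume S) (P Q : Set (Euc n)) :
    deltaV (f '' P) (f '' Q) = deltaV P Q := by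
  simp only [deltaV, ← image_sdiff hf, hvol]

theorem IsAGLZ.deltaV_aglMap_image {A : Matrix (Fin n) (Fin n) ℤ} (hA : IsAGLZ A) (c : Euc n)
    (P Q : Set (Euc n)) : deltaV (aglMap A c '' P) (aglMap A c '' Q) = deltaV P Q :=
  deltaV_image_image (hA.toHomeomorph c).injective (hA.volume_aglMap_image c) P Q

theorem deltaV_image_add_right (t : Euc n) (P Q : Set (Euc n)) :
    deltaV ((fun x => x + t) '' P) ((fun x => x + t) '' Q) = deltaV P Q :=
  deltaV_image_image (add_left_injective t)
    (fun S => by rw [image_add_right, measure_preimage_add_right]) P Q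

theorem deltaV_triangle {P Q R : Set (Euc n)} (hP : volume P ≠ ⊤) (hQ : volume Q ≠ ⊤)
    (hR : volume R ≠ ⊤) : deltaV P R ≤ deltaV P Q + deltaV Q R := by
  have h₁ := toReal_measure_diff_le_add (u := R) hP hQ
  have h₂ := toReal_measure_diff_le_add (u := P) hR hQ
  simp only [deltaV]
  linarith

theorem abs_deltaV_sub_deltaV_le {P X Y : Set (Euc n)} (hP : volume P ≠ ⊤)
    (hX : volume X ≠ ⊤) (hY : volume Y ≠ ⊤) : |deltaV P X - deltaV P Y| ≤ deltaV X Y := by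
  have h₁ := deltaV_triangle hP hY hX
  have h₂ := deltaV_triangle hP hX hY
  rw [deltaV_comm Y X] at h₁
  exact abs_sub_le_iff.mpr ⟨by linarith, by linarith⟩

theorem deltaV_eq_toReal_measure_symmDiff {P Q : Set (Euc n)} (hP : MeasurableSet P)
    (hQ : MeasurableSet Q) (hPQ : volume (P ∆ Q) ≠ ⊤) :
    deltaV P Q = (volume (P ∆ Q)).toReal := by
  rw [measure_symmDiff_eq hP.nullMeasurableSet hQ.nullMeasurableSet] at hPQ ⊢
  rw [ENNReal.toReal_add (ENNReal.add_ne_top.mp hPQ).1 (ENNReal.add_ne_top.mp hPQ).2, deltaV]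

theorem tendsto_deltaV_image_add_right {K : Set (Euc n)} (hK : IsCompact K) :
    Tendsto (fun t => deltaV ((fun x => x + t) '' K) K) (𝓝 0) (𝓝 0) := by
  have hneg : Tendsto (fun t : Euc n => -t) (𝓝 0) (𝓝 0) := by
    simpa using (continuous_neg (G := Euc n)).tendsto 0
  have hsymm := (ENNReal.tendsto_toReal ENNReal.zero_ne_top).comp
    ((tendsto_measure_preimage_add_right_symmDiff hK.measurableSet.nullMeasurableSet
      (hK.measure_lt_top (μ := volume)).ne).comp hneg)
  refine hsymm.congr fun t => ?_
  have hKt : IsCompact ((fun x => x + t) '' K) := hK.image (continuous_add_const t)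
  rw [Function.comp_apply, Function.comp_apply, ← image_add_right,
    deltaV_eq_toReal_measure_symmDiff hKt.measurableSet hK.measurableSet]
  exact measure_ne_top_of_subset symmDiff_le_sup
    (measure_union_ne_top hKt.measure_lt_top.ne hK.measure_lt_top.ne)

theorem continuous_deltaV_image_add_right {P K : Set (Euc n)} (hP : volume P ≠ ⊤)
    (hK : IsCompact K) : Continuous fun t => deltaV P ((fun x => x + t) '' K) := by
  have hfin : ∀ t : Euc n, volume ((fun x => x + t) '' K) ≠ ⊤ := fun t =>
    (hK.image (continuous_add_const t)).measure_lt_top.ne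
  refine continuous_iff_continuousAt.mpr fun t₀ => tendsto_iff_dist_tendsto_zero.mpr ?_
  refine squeeze_zero (fun _ => dist_nonneg) (fun t => ?_)
    ((tendsto_deltaV_image_add_right hK).comp (tendsto_sub_nhds_zero_iff.mpr tendsto_id))
  have hshift :
      (fun x => x + t₀) '' ((fun x => x + (t - t₀)) '' K) = (fun x => x + t) '' K := by
    simp only [image_image, add_assoc, sub_add_cancel]
  calc dist (deltaV P ((fun x => x + t) '' K)) (deltaV P ((fun x => x + t₀) '' K))
      ≤ deltaV ((fun x => x + t) '' K) ((fun x => x + t₀) '' K) :=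
        abs_deltaV_sub_deltaV_le hP (hfin t) (hfin t₀)
    _ = deltaV ((fun x => x + (t - t₀)) '' K) K := by rw [← hshift, deltaV_image_add_right]

theorem IsProperBody.eq_of_deltaV_eq_zero {P Q : Set (Euc n)} (hP : IsProperBody P)
    (hQ : IsProperBody Q) (h : deltaV P Q = 0) : P = Q := by
  have hnull : ∀ {X Y : Set (Euc n)}, IsCompact X → (volume (X \ Y)).toReal = 0 →
      volume (X \ Y) = 0 := fun hX h =>
    (ENNReal.toReal_eq_zero_iff _).mp h |>.resolve_right
      (measure_ne_top_of_subset sdiff_subset hX.measure_lt_top.ne)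
  obtain ⟨hPQ, hQP⟩ :=
    (add_eq_zero_iff_of_nonneg ENNReal.toReal_nonneg ENNReal.toReal_nonneg).mp h
  exact (subset_of_measure_diff_eq_zero hP.subset_closure_interior hQ.2.1.isClosed
    (hnull hP.2.1 hPQ)).antisymm
    (subset_of_measure_diff_eq_zero hQ.subset_closure_interior hP.2.1.isClosed
      (hnull hQ.2.1 hQP))

theorem subset_closedBall_of_two_mul_deltaV_lt {P K : Set (Euc n)} {D : ℝ}
    (hPD : P ⊆ closedBall 0 D) (hK : Convex ℝ K) (hKfin : volume K ≠ ⊤)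
    (h : 2 * deltaV P K < (4 : ℝ)⁻¹ ^ n * (volume K).toReal) : K ⊆ closedBall 0 (2 * D) := by
  intro x hx
  by_contra hxD
  rw [mem_closedBall_zero_iff, not_le] at hxD
  have hfar := ofReal_mul_measure_inter_le_measure_diff volume hK hx hPD hxD
  rw [finrank_euclideanSpace_fin] at hfar
  have hinter : volume (K ∩ P) ≠ ⊤ := measure_ne_top_of_subset inter_subset_left hKfin
  have hdiff : volume (K \ P) ≠ ⊤ := measure_ne_top_of_subset sdiff_subset hKfin
  have hfar' : (4 : ℝ)⁻¹ ^ n * (volume (K ∩ P)).toReal ≤ (volume (K \ P)).toReal := by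
    simpa [ENNReal.toReal_mul] using ENNReal.toReal_mono hdiff hfar
  have hsplit : (4 : ℝ)⁻¹ ^ n * (volume K).toReal ≤
      (4 : ℝ)⁻¹ ^ n * (volume (K ∩ P)).toReal + (4 : ℝ)⁻¹ ^ n * (volume (K \ P)).toReal := by
    rw [← mul_add]
    exact mul_le_mul_of_nonneg_left
      (ENNReal.toReal_le_add (measure_le_inter_add_sdiff _ _ _) hinter hdiff) (by positivity)
  have hpow : (4 : ℝ)⁻¹ ^ n ≤ 1 := pow_le_one₀ (by norm_num) (by norm_num)
  have hKP : (volume (K \ P)).toReal ≤ deltaV P K := le_add_of_nonneg_left ENNReal.toReal_nonneg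
  have hscaled : (4 : ℝ)⁻¹ ^ n * (volume (K \ P)).toReal ≤ (volume (K \ P)).toReal :=
    mul_le_of_le_one_left ENNReal.toReal_nonneg hpow
  linarith

end DeltaV

section OrbitDistance

variable {n : ℕ}

theorem deltaVOrbit_le {P Q P' Q' : Set (Euc n)} (hP : inOrbit P P') (hQ : inOrbit Q Q') :
    deltaVOrbit P Q ≤ deltaV P' Q' :=
  csInf_le ⟨0, by rintro _ ⟨P', Q', -, -, rfl⟩; exact deltaV_nonneg _ _⟩ ⟨P', Q', hP, hQ, rfl⟩

theorem le_deltaVOrbit {P Q : Set (Euc n)} {a : ℝ}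
    (h : ∀ P' Q', inOrbit P P' → inOrbit Q Q' → a ≤ deltaV P' Q') : a ≤ deltaVOrbit P Q :=
  le_csInf ⟨_, P, Q, inOrbit_refl P, inOrbit_refl Q, rfl⟩ <| by
    rintro _ ⟨P', Q', hP, hQ, rfl⟩
    exact h P' Q' hP hQ

theorem deltaVOrbit_nonneg (P Q : Set (Euc n)) : 0 ≤ deltaVOrbit P Q :=
  le_deltaVOrbit fun _ _ _ _ => deltaV_nonneg _ _

theorem deltaVOrbit_comm (P Q : Set (Euc n)) : deltaVOrbit P Q = deltaVOrbit Q P := by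
  have key : ∀ P Q : Set (Euc n), deltaVOrbit P Q ≤ deltaVOrbit Q P := fun P Q =>
    le_deltaVOrbit fun Q' P' hQ hP => deltaV_comm P' Q' ▸ deltaVOrbit_le hP hQ
  exact (key P Q).antisymm (key Q P)

theorem deltaVOrbit_eq_zero_of_inOrbit {P Q : Set (Euc n)} (h : inOrbit P Q) :
    deltaVOrbit P Q = 0 :=
  ((deltaVOrbit_le h (inOrbit_refl Q)).trans_eq (deltaV_self Q)).antisymm
    (deltaVOrbit_nonneg P Q)

/-- Move both representatives by the inverse of the map taking `P` to `P'`. -/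
theorem exists_deltaV_lt_of_deltaVOrbit_lt {P Q : Set (Euc n)} {a : ℝ}
    (h : deltaVOrbit P Q < a) : ∃ Q', inOrbit Q Q' ∧ deltaV P Q' < a := by
  by_contra! hge
  refine h.not_ge (le_deltaVOrbit fun P' Q' hP hQ => ?_)
  obtain ⟨A, c, hA, rfl⟩ := inOrbit_symm hP
  rw [← hA.deltaV_aglMap_image c]
  exact hge _ (hQ.aglMap_image hA c)

theorem deltaVOrbit_triangle {P Q R : Set (Euc n)} (hP : IsCompact P) (hQ : IsCompact Q)
    (hR : IsCompact R) : deltaVOrbit P R ≤ deltaVOrbit P Q + deltaVOrbit Q R := by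
  refine le_of_forall_pos_lt_add fun ε hε => ?_
  obtain ⟨Q', ⟨A, c, hA, rfl⟩, h₁⟩ :=
    exists_deltaV_lt_of_deltaVOrbit_lt (lt_add_of_pos_right (deltaVOrbit P Q) (half_pos hε))
  obtain ⟨R', hR', h₂⟩ :=
    exists_deltaV_lt_of_deltaVOrbit_lt (lt_add_of_pos_right (deltaVOrbit Q R) (half_pos hε))
  have hR'' : inOrbit R (aglMap A c '' R') := hR'.aglMap_image hA c
  have hfin : ∀ {X Y : Set (Euc n)}, inOrbit X Y → IsCompact X → volume Y ≠ ⊤ :=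
    fun hXY hX => (hXY.isCompact hX).measure_lt_top.ne
  calc deltaVOrbit P R ≤ deltaV P (aglMap A c '' R') := deltaVOrbit_le (inOrbit_refl P) hR''
    _ ≤ deltaV P (aglMap A c '' Q) + deltaV (aglMap A c '' Q) (aglMap A c '' R') :=
        deltaV_triangle (hfin (inOrbit_refl P) hP) (hfin ⟨A, c, hA, rfl⟩ hQ) (hfin hR'' hR)
    _ = deltaV P (aglMap A c '' Q) + deltaV Q R' := by rw [hA.deltaV_aglMap_image]
    _ < deltaVOrbit P Q + deltaVOrbit Q R + ε := by linarith

theorem exists_seq_tendsto_deltaV_of_deltaVOrbit_eq_zero {P Q : Set (Euc n)}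
    (h : deltaVOrbit P Q = 0) :
    ∃ (A : ℕ → Matrix (Fin n) (Fin n) ℤ) (c : ℕ → Euc n), (∀ k, IsAGLZ (A k)) ∧
      Tendsto (fun k => deltaV P (aglMap (A k) (c k) '' Q)) atTop (𝓝 0) := by
  have hlt : ∀ k : ℕ, deltaVOrbit P Q < 1 / ((k : ℝ) + 1) := fun _ =>
    h ▸ Nat.one_div_pos_of_nat
  choose Q' hQ' hδ using fun k => exists_deltaV_lt_of_deltaVOrbit_lt (hlt k)
  choose A c hA hQ'eq using hQ'
  refine ⟨A, c, hA, squeeze_zero (fun _ => deltaV_nonneg _ _) (fun k => ?_)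
    tendsto_one_div_add_atTop_nhds_zero_nat⟩
  exact (hQ'eq k ▸ hδ k).le

end OrbitDistance

section Compactness

variable {n : ℕ}

theorem abs_entry_le_of_aglMap_image_subset {Q : Set (Euc n)} {A : Matrix (Fin n) (Fin n) ℤ}
    {c q₀ : Euc n} {r R : ℝ} (hr : 0 < r) (hball : ball q₀ r ⊆ Q)
    (himg : aglMap A c '' Q ⊆ closedBall 0 R) (i j : Fin n) : |(A i j : ℝ)| ≤ 4 * R / r := by
  set v : Euc n := (r / 2) • EuclideanSpace.single j 1
  have hv : ‖v‖ < r := by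
    simp only [v, norm_smul, PiLp.norm_single, norm_one, Real.norm_eq_abs,
      abs_of_pos (half_pos hr)]
    linarith
  have himg' : ∀ x ∈ ball q₀ r, ‖aglMap A c x‖ ≤ R := fun x hx =>
    mem_closedBall_zero_iff.mp (himg (mem_image_of_mem _ (hball hx)))
  have hdiff : aglLin A v = aglMap A c (q₀ + v) - aglMap A c q₀ := by
    simp [aglMap_eq]
  have hnorm : ‖aglLin A v‖ ≤ 2 * R := by
    rw [hdiff]
    refine (norm_sub_le _ _).trans ?_
    linarith [himg' (q₀ + v) (by simpa using hv), himg' q₀ (mem_ball_self hr)]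
  have hentry : aglLin A v i = r / 2 * A i j := by
    simp [v, aglLin, Matrix.toLpLin_apply, Matrix.mulVec_single]
  have := (PiLp.norm_apply_le (aglLin A v) i).trans hnorm
  rw [hentry, Real.norm_eq_abs, abs_mul, abs_of_pos (half_pos hr)] at this
  rw [le_div_iff₀ hr]
  linarith

theorem mem_closedBall_of_aglMap_image_subset {Q : Set (Euc n)}
    {A : Matrix (Fin n) (Fin n) ℤ} {c q₀ : Euc n} {R : ℝ} (hq₀ : q₀ ∈ Q)
    (himg : aglMap A c '' Q ⊆ closedBall 0 R) : c ∈ closedBall (-aglLin A q₀) R := by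
  have := mem_closedBall_zero_iff.mp (himg (mem_image_of_mem _ hq₀))
  rwa [mem_closedBall, dist_eq_norm, sub_neg_eq_add, add_comm]

theorem continuous_deltaV_aglMap_image {P Q : Set (Euc n)} (hP : volume P ≠ ⊤)
    (hQ : IsCompact Q) :
    Continuous fun g : Matrix (Fin n) (Fin n) ℤ × Euc n => deltaV P (aglMap g.1 g.2 '' Q) :=
  continuous_prod_of_discrete_left.mpr fun A => by
    simpa only [aglMap_image_eq] using continuous_deltaV_image_add_right hP
      (hQ.image (aglLin A).continuous_of_finiteDimensional)

theorem eventually_aglMap_image_subset_closedBall {P Q : Set (Euc n)} {D : ℝ}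
    (hPD : P ⊆ closedBall 0 D) (hQ : IsProperBody Q) {A : ℕ → Matrix (Fin n) (Fin n) ℤ}
    {c : ℕ → Euc n} (hA : ∀ k, IsAGLZ (A k))
    (hlim : Tendsto (fun k => deltaV P (aglMap (A k) (c k) '' Q)) atTop (𝓝 0)) :
    ∀ᶠ k in atTop, aglMap (A k) (c k) '' Q ⊆ closedBall 0 (2 * D) := by
  have hvolQ : 0 < (volume Q).toReal := ENNReal.toReal_pos
    (Measure.measure_pos_of_nonempty_interior _ hQ.2.2.2).ne' hQ.2.1.measure_lt_top.ne
  filter_upwards [hlim.eventually (gt_mem_nhds (by positivity :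
    0 < (4 : ℝ)⁻¹ ^ n * (volume Q).toReal / 2))] with k hk
  have hvol := (hA k).volume_aglMap_image (c k) Q
  refine subset_closedBall_of_two_mul_deltaV_lt hPD (hQ.aglMap_image (hA k) (c k)).2.2.1
    (hvol ▸ hQ.2.1.measure_lt_top.ne) ?_
  rw [hvol]
  linarith

end Compactness

theorem inOrbit_of_deltaVOrbit_eq_zero {n : ℕ} {P Q : Set (Euc n)} (hP : IsProperBody P)
    (hQ : IsProperBody Q) (h : deltaVOrbit P Q = 0) : inOrbit P Q := by
  obtain ⟨A, c, hA, hlim⟩ := exists_seq_tendsto_deltaV_of_deltaVOrbit_eq_zero h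
  obtain ⟨D, hPD⟩ := hP.2.1.isBounded.subset_closedBall (0 : Euc n)
  obtain ⟨q₀, hq₀⟩ := hQ.2.2.2
  obtain ⟨r, hr, hball⟩ := Metric.isOpen_iff.mp isOpen_interior q₀ hq₀
  set S := {A : Matrix (Fin n) (Fin n) ℤ | IsAGLZ A ∧ ∀ i j, |(A i j : ℝ)| ≤ 4 * (2 * D) / r}
  set C := ⋃ A ∈ S, {A} ×ˢ closedBall (-aglLin A q₀) (2 * D)
  have hC : IsCompact C :=
    ((Matrix.finite_setOf_forall_abs_le _).subset fun A hA => hA.2).isCompact_biUnion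
      fun A _ => isCompact_singleton.prod (isCompact_closedBall _ _)
  have hmem : ∀ᶠ k in atTop, (A k, c k) ∈ C :=
    (eventually_aglMap_image_subset_closedBall hPD hQ hA hlim).mono fun k hk =>
      mem_biUnion (x := A k)
        ⟨hA k, abs_entry_le_of_aglMap_image_subset hr (hball.trans interior_subset) hk⟩
        ⟨rfl, mem_closedBall_of_aglMap_image_subset (interior_subset hq₀) hk⟩
  obtain ⟨⟨A₀, c₀⟩, hmem₀, φ, hφ, hconv⟩ := hC.tendsto_subseq' hmem.frequently
  obtain ⟨_, ⟨hA₀, -⟩, rfl, -⟩ := mem_iUnion₂.mp hmem₀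
  have hzero : deltaV P (aglMap A₀ c₀ '' Q) = 0 := by
    have hsub := (continuous_deltaV_aglMap_image hP.2.1.measure_lt_top.ne hQ.2.1).tendsto _
      |>.comp hconv
    simp only [Function.comp_def] at hsub
    exact tendsto_nhds_unique hsub (hlim.comp hφ.tendsto_atTop)
  exact inOrbit_symm ⟨A₀, c₀, hA₀, hP.eq_of_deltaV_eq_zero (hQ.aglMap_image hA₀ c₀) hzero⟩

/-- `δ̃^V` is a metric on the set of `AGL(n,ℤ)`-orbits of proper convex
bodies: it is symmetric, satisfies the triangle inequality, vanishes on equal orbits, and is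
strictly positive on distinct orbits. -/
theorem delzant_stmt_7 (n : ℕ) :
    (∀ P Q : Set (Euc n), IsProperBody P → IsProperBody Q →
      deltaVOrbit P Q = deltaVOrbit Q P) ∧
    (∀ P Q R : Set (Euc n), IsProperBody P → IsProperBody Q → IsProperBody R →
      deltaVOrbit P R ≤ deltaVOrbit P Q + deltaVOrbit Q R) ∧
    (∀ P Q : Set (Euc n), IsProperBody P → IsProperBody Q →
      inOrbit P Q → deltaVOrbit P Q = 0) ∧
    (∀ P Q : Set (Euc n), IsProperBody P → IsProperBody Q →
      ¬ inOrbit P Q → 0 < deltaVOrbit P Q) :=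
  ⟨fun P Q _ _ => deltaVOrbit_comm P Q,
    fun _ _ _ hP hQ hR => deltaVOrbit_triangle hP.2.1 hQ.2.1 hR.2.1,
    fun _ _ _ _ h => deltaVOrbit_eq_zero_of_inOrbit h,
    fun P Q hP hQ h => (deltaVOrbit_nonneg P Q).lt_of_ne fun h0 =>
      h (inOrbit_of_deltaVOrbit_eq_zero hP hQ h0.symm)⟩
end
end

section
/- Let α₁,…,α_m ∈ (ℝⁿ)* be finitely many nonzero vectors whose nonnegative span is all of (ℝⁿ)*. For b ∈ ℝ^m let P(b) = {x ∈ ℝⁿ : ⟨α_i, x⟩ ≤ b_i for i = 1,…,m}. Then b equals the vector (h(α₁),…,h(α_m)) of values at the α_i of the support function h of some (necessarily bounded, possibly lower-dimensional or empty only if excluded) polytope P(b) — equivalently, P(b) is nonempty and b_j = max_{x ∈ P(b)} ⟨α_j, x⟩ for every j — if and only if b satisfies the following linear inequalities: (1) for every nonnegative linear dependence Σᵢ λᵢαᵢ = 0 with all λᵢ ≥ 0, one has Σᵢ λᵢbᵢ ≥ 0; and (2) for every nonnegative combination Σᵢ λᵢαᵢ = α_j with all λᵢ ≥ 0, one has Σᵢ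 λᵢbᵢ ≥ b_j. Moreover, it suffices to impose these inequalities for the (finitely many) dependences and combinations with minimal support. -/
/- Common definitions: polytopes, faces, Delzant polytopes, normal fans,
   the symmetric-difference and Hausdorff metrics, and the AGL(n,ℤ) action. -/

open Set MeasureTheory Metric
open scoped Pointwise

noncomputable section

/-- The polyhedron `P(b) = {x : ⟨α i, x⟩ ≤ b i for all i}`. -/
def polyOf {n m : ℕ} (α : Fin m → Euc n) (b : Fin m → ℝ) : Set (Euc n) :=
  {x | ∀ i, dotE (α i) x ≤ b i}

/-- `lam` is a nonnegative linear dependence among the `α i` with minimal support. -/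
def MinimalDep {n m : ℕ} (α : Fin m → Euc n) (lam : Fin m → ℝ) : Prop :=
  (∀ i, 0 ≤ lam i) ∧ (∑ i, lam i • α i) = 0 ∧ lam ≠ 0 ∧
  ∀ mu : Fin m → ℝ, (∀ i, 0 ≤ mu i) → (∑ i, mu i • α i) = 0 → mu ≠ 0 →
    Function.support mu ⊆ Function.support lam →
    Function.support mu = Function.support lam

/-- `lam` is a nonnegative combination expressing `α j` with minimal support. -/
def MinimalComb {n m : ℕ} (α : Fin m → Euc n) (j : Fin m) (lam : Fin m → ℝ) : Prop :=
  (∀ i, 0 ≤ lam i) ∧ (∑ i, lam i • α i) = α j ∧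
  ∀ mu : Fin m → ℝ, (∀ i, 0 ≤ mu i) → (∑ i, mu i • α i) = α j →
    Function.support mu ⊆ Function.support lam →
    Function.support mu = Function.support lam

/-!
Necessity: for `x ∈ P(b)`, applying `⟨·, x⟩` to `Σ λᵢ αᵢ` gives `Σ λᵢ bᵢ ≥ 0`, resp. `≥ b_j` when
`⟨α_j, x⟩ = b_j`. Sufficiency is Farkas' lemma, for the system `⟨αᵢ, x⟩ ≤ bᵢ` (nonemptiness) and for
the same system augmented by `⟨-α_j, x⟩ ≤ -b_j` (attainment of `b_j`). Farkas' lemma separates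
`(0, -1)` from the cone spanned by the `(αᵢ, bᵢ)` and `(0, 1)`; this cone is closed because, by the
conic Carathéodory theorem, it is a finite union of images of orthants under injective linear maps.

Minimal supports suffice by induction on the support of `λ`. If `μ ≥ 0` with the same sum has
strictly smaller support, subtract `t • μ` from `λ` (for combinations, `t • (μ - λ)`) with the
largest `t` keeping it nonnegative: a coefficient vanishes, and the inequality for `λ` is a
nonnegative combination of those for `μ` and for the new `λ'`. For a combination with `μ ≤ λ`,
split `λ = μ + (λ - μ)` instead, `λ - μ` being a dependence.
-/

open Function InnerProductSpace

section Support

variable {ι : Type*}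

theorem Function.support_induction [Finite ι] {M : Type*} [Zero M] {p : (ι → M) → Prop}
    (f : ι → M) (h : ∀ f, (∀ g, support g ⊂ support f → p g) → p f) : p f :=
  (InvImage.wf support wellFounded_lt).induction f h

theorem exists_nonneg_sub_smul_support_ssubset [Fintype ι] {lam d : ι → ℝ} (hlam : 0 ≤ lam)
    (hd : support d ⊆ support lam) (hpos : ∃ i, 0 < d i) :
    ∃ t : ℝ, 0 ≤ t ∧ 0 ≤ lam - t • d ∧ support (lam - t • d) ⊂ support lam := by
  set P := Finset.univ.filter fun i => 0 < d i
  have hP : P.Nonempty := by simpa [P, Finset.filter_nonempty_iff] using hpos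
  obtain ⟨i₀, hi₀, ht⟩ := P.exists_mem_eq_inf' hP fun i => lam i / d i
  set t := P.inf' hP fun i => lam i / d i
  have hdi₀ : 0 < d i₀ := (Finset.mem_filter.1 hi₀).2
  have ht₀ : 0 ≤ t := ht ▸ div_nonneg (hlam i₀) hdi₀.le
  refine ⟨t, ht₀, fun i => ?_, ?_⟩
  · have hlami : 0 ≤ lam i := hlam i
    simp only [Pi.zero_apply, Pi.sub_apply, Pi.smul_apply, smul_eq_mul, sub_nonneg]
    rcases lt_or_ge 0 (d i) with hdi | hdi
    · rw [← le_div_iff₀ hdi]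
      exact P.inf'_le (fun i => lam i / d i) (Finset.mem_filter.2 ⟨Finset.mem_univ i, hdi⟩)
    · exact (mul_nonpos_of_nonneg_of_nonpos ht₀ hdi).trans hlami
  · refine (Set.ssubset_iff_of_subset fun i hi => ?_).2 ⟨i₀, hd hdi₀.ne', ?_⟩
    · by_contra h
      have : d i = 0 := by_contra fun hdi => h (hd hdi)
      simp_all
    · simp [ht, hdi₀.ne']

end Support

section Farkas

variable {ι κ : Type*} [Fintype ι] [Fintype κ]

theorem exists_sum_smul_eq_zero_of_not_linearIndepOn {F : Type*} [AddCommGroup F] [Module ℝ F]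
    {w : κ → F} {s : Set κ} (h : ¬LinearIndepOn ℝ w s) :
    ∃ c : κ → ℝ, ∑ i, c i • w i = 0 ∧ support c ⊆ s ∧ ∃ i, 0 < c i := by
  rw [linearIndepOn_iff''] at h
  push Not at h
  obtain ⟨t, g, hts, hgt, hsum, i, -, hgi⟩ := h
  have hsum' : ∑ i, g i • w i = 0 := by
    rwa [← Finset.sum_subset (Finset.subset_univ t) fun i _ hi => by simp [hgt i hi]]
  have hsupp : support g ⊆ s := fun i hi => hts (by_contra fun h => hi (hgt i h))
  rcases hgi.lt_or_gt with hneg | hpos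
  · exact ⟨-g, by simp [hsum'], by simpa using hsupp, i, by simpa using hneg⟩
  · exact ⟨g, hsum', hsupp, i, hpos⟩

theorem exists_linearIndepOn_support_of_nonneg {F : Type*} [AddCommGroup F] [Module ℝ F]
    (w : κ → F) {l : κ → ℝ} (hl : 0 ≤ l) :
    ∃ mu, 0 ≤ mu ∧ LinearIndepOn ℝ w (support mu) ∧
      Fintype.linearCombination ℝ w mu = Fintype.linearCombination ℝ w l := by
  induction l using Function.support_induction with
  | h l ih =>
  by_cases hind : LinearIndepOn ℝ w (support l)
  · exact ⟨l, hl, hind, rfl⟩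
  obtain ⟨c, hc, hcs, hpos⟩ := exists_sum_smul_eq_zero_of_not_linearIndepOn hind
  obtain ⟨t, -, hnonneg, hss⟩ := exists_nonneg_sub_smul_support_ssubset hl hcs hpos
  obtain ⟨mu, hmu, hmuind, hsum⟩ := ih _ hss hnonneg
  refine ⟨mu, hmu, hmuind, hsum.trans ?_⟩
  rw [map_sub, map_smul, Fintype.linearCombination_apply ℝ w c, hc, smul_zero, sub_zero]

variable {E : Type*} [NormedAddCommGroup E] [NormedSpace ℝ E]

theorem isClosed_image_Ici_of_linearIndependent {w : κ → E} (hw : LinearIndependent ℝ w) :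
    IsClosed (Fintype.linearCombination ℝ w '' Set.Ici 0) :=
  (LinearMap.isClosedEmbedding_of_injective <| LinearMap.ker_eq_bot.2 <|
    linearIndependent_iff_injective_fintypeLinearCombination.1 hw).isClosedMap _ isClosed_Ici

theorem isClosed_image_Ici (w : κ → E) :
    IsClosed (Fintype.linearCombination ℝ w '' Set.Ici 0) := by
  classical
  have hunion : Fintype.linearCombination ℝ w '' Set.Ici 0 =
      ⋃ (s : Set κ) (_ : LinearIndepOn ℝ w s),
        Fintype.linearCombination ℝ (fun i : s => w i) '' Set.Ici 0 := by
    ext x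
    simp only [Set.mem_image, Set.mem_Ici, Set.mem_iUnion, exists_prop,
      Fintype.linearCombination_apply]
    constructor
    · rintro ⟨l, hl, rfl⟩
      obtain ⟨mu, hmu, hind, hsum⟩ := exists_linearIndepOn_support_of_nonneg w hl
      refine ⟨support mu, hind, fun i => mu i, fun i => hmu i, ?_⟩
      rw [← Fintype.linearCombination_apply ℝ w l, ← hsum, Fintype.linearCombination_apply,
        ← Fintype.sum_subtype_add_sum_subtype (· ∈ support mu), add_eq_left.2]
      exact Fintype.sum_eq_zero _ fun i => by simp [notMem_support.1 i.2]
    · rintro ⟨s, -, l, hl, rfl⟩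
      refine ⟨fun i => if h : i ∈ s then l ⟨i, h⟩ else 0, fun i => ?_, ?_⟩
      · dsimp only
        split_ifs
        exacts [hl _, le_rfl]
      · rw [← Fintype.sum_subtype_add_sum_subtype (· ∈ s), add_eq_left.2]
        · simp
        · exact Fintype.sum_eq_zero _ fun i => by simp [i.2]
  rw [hunion]
  exact isClosed_iUnion_of_finite fun s => isClosed_iUnion_of_finite fun hs =>
    isClosed_image_Ici_of_linearIndependent hs

theorem exists_dual_neg_of_notMem_image_Ici {w : κ → E} {p : E}
    (hp : p ∉ Fintype.linearCombination ℝ w '' Set.Ici 0) :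
    ∃ g : StrongDual ℝ E, g p < 0 ∧ ∀ k, 0 ≤ g (w k) := by
  classical
  obtain ⟨g, u, hgp, hgK⟩ := geometric_hahn_banach_point_closed
    ((convex_Ici 0).linear_image _) (isClosed_image_Ici w) hp
  have hu : u < 0 := by simpa using hgK 0 ⟨0, Set.self_mem_Ici, map_zero _⟩
  refine ⟨g, hgp.trans hu, fun k => ?_⟩
  by_contra! hk
  have hmem : (u / g (w k)) • w k ∈ Fintype.linearCombination ℝ w '' Set.Ici 0 :=
    ⟨Pi.single k (u / g (w k)), Pi.single_nonneg.2 (div_nonneg_of_nonpos hu.le hk.le), by simp⟩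
  have := hgK _ hmem
  rw [map_smul, smul_eq_mul, div_mul_cancel₀ _ hk.ne] at this
  exact lt_irrefl u this

theorem exists_dual_le_of_forall_nonneg {v : ι → E} {c : ι → ℝ}
    (h : ∀ l : ι → ℝ, 0 ≤ l → ∑ i, l i • v i = 0 → 0 ≤ ∑ i, l i * c i) :
    ∃ f : StrongDual ℝ E, ∀ i, f (v i) ≤ c i := by
  let w : Option ι → E × ℝ := fun o => o.elim (0, 1) fun i => (v i, c i)
  have hp : ((0, -1) : E × ℝ) ∉ Fintype.linearCombination ℝ w '' Set.Ici 0 := by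
    rintro ⟨l, hl, hsum⟩
    simp only [Fintype.linearCombination_apply, Fintype.sum_option, w, Option.elim, Prod.smul_mk,
      smul_zero, smul_eq_mul, mul_one, Prod.fst_sum, Prod.snd_sum, Prod.ext_iff, Prod.fst_add,
      Prod.snd_add, zero_add] at hsum
    have := h (fun i => l (some i)) (fun i => hl _) hsum.1
    have : 0 ≤ l none := hl none
    linarith [hsum.2]
  obtain ⟨g, hg0, hgw⟩ := exists_dual_neg_of_notMem_image_Ici hp
  have hs : 0 < g (0, 1) := by
    have : g (0, -1) = -g (0, 1) := by rw [← map_neg, Prod.neg_mk, neg_zero]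
    linarith [hgw none]
  refine ⟨-(g (0, 1))⁻¹ • g.comp (ContinuousLinearMap.inl ℝ E ℝ), fun i => ?_⟩
  have hsplit : g (v i, c i) = g (v i, 0) + c i * g (0, 1) := by
    rw [← smul_eq_mul, ← map_smul, ← map_add, Prod.smul_mk, smul_zero, smul_eq_mul, mul_one,
      Prod.mk_add_mk, add_zero, zero_add]
  have := hgw (some i)
  simp only [w, Option.elim] at this
  simp only [smul_apply, ContinuousLinearMap.comp_apply,
    ContinuousLinearMap.inl_apply, smul_eq_mul, neg_mul]
  rw [neg_le, ← div_eq_inv_mul, le_div_iff₀ hs]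
  linarith

theorem exists_dual_le_and_eq_of_forall_nonneg {v : ι → E} {c : ι → ℝ}
    (hdep : ∀ l : ι → ℝ, 0 ≤ l → ∑ i, l i • v i = 0 → 0 ≤ ∑ i, l i * c i) {j : ι}
    (hcomb : ∀ l : ι → ℝ, 0 ≤ l → ∑ i, l i • v i = v j → c j ≤ ∑ i, l i * c i) :
    ∃ f : StrongDual ℝ E, (∀ i, f (v i) ≤ c i) ∧ f (v j) = c j := by
  obtain ⟨f, hf⟩ := exists_dual_le_of_forall_nonneg (v := fun o : Option ι => o.elim (-v j) v)
      (c := fun o => o.elim (-c j) c) fun l hl hsum => by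
    have hl₀ : 0 ≤ l none := hl none
    simp only [Fintype.sum_option, Option.elim, smul_neg, neg_add_eq_zero, mul_neg] at hsum ⊢
    rw [neg_add_eq_sub, sub_nonneg]
    rcases hl₀.eq_or_lt with h0 | hpos
    · rw [← h0, zero_smul] at hsum
      rw [← h0, zero_mul]
      exact hdep (fun i => l (some i)) (fun i => hl _) hsum.symm
    · have := hcomb (fun i => (l none)⁻¹ * l (some i))
        (fun i => mul_nonneg (inv_nonneg.2 hpos.le) (hl _))
        (by simp_rw [mul_smul, ← Finset.smul_sum, ← hsum, smul_smul, inv_mul_cancel₀ hpos.ne',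
          one_smul])
      simp_rw [mul_assoc, ← Finset.mul_sum] at this
      rwa [le_inv_mul_iff₀ hpos] at this
  refine ⟨f, fun i => hf (some i), le_antisymm (hf (some j)) ?_⟩
  simpa using hf none

theorem dual_sum_smul_le {v : ι → E} {c : ι → ℝ} {f : StrongDual ℝ E} (hf : ∀ i, f (v i) ≤ c i)
    {l : ι → ℝ} (hl : 0 ≤ l) : f (∑ i, l i • v i) ≤ ∑ i, l i * c i := by
  rw [map_sum]
  exact Finset.sum_le_sum fun i _ => by
    rw [map_smul, smul_eq_mul]
    exact mul_le_mul_of_nonneg_left (hf i) (hl i)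

end Farkas

section Polytope

variable {n m : ℕ} (α : Fin m → Euc n) (b : Fin m → ℝ)

theorem dotE_eq_toDual (a x : Euc n) : dotE a x = toDual ℝ (Euc n) x a := by
  simp [dotE, toDual_apply_apply, PiLp.inner_apply]

theorem mem_polyOf_iff_toDual {x : Euc n} :
    x ∈ polyOf α b ↔ ∀ i, toDual ℝ (Euc n) x (α i) ≤ b i := by
  simp [polyOf, dotE_eq_toDual]

theorem polyOf_nonempty_iff : (polyOf α b).Nonempty ↔
    ∀ lam : Fin m → ℝ, 0 ≤ lam → ∑ i, lam i • α i = 0 → 0 ≤ ∑ i, lam i * b i := by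
  constructor
  · rintro ⟨x, hx⟩ lam hlam hsum
    simpa [hsum] using dual_sum_smul_le ((mem_polyOf_iff_toDual α b).1 hx) hlam
  · intro h
    obtain ⟨f, hf⟩ := exists_dual_le_of_forall_nonneg h
    obtain ⟨x, rfl⟩ := (toDual ℝ (Euc n)).surjective f
    exact ⟨x, (mem_polyOf_iff_toDual α b).2 hf⟩

theorem exists_mem_polyOf_dotE_eq_iff (j : Fin m) :
    (∃ x ∈ polyOf α b, dotE (α j) x = b j) ↔
      (∀ lam : Fin m → ℝ, 0 ≤ lam → ∑ i, lam i • α i = 0 → 0 ≤ ∑ i, lam i * b i) ∧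
      ∀ lam : Fin m → ℝ, 0 ≤ lam → ∑ i, lam i • α i = α j → b j ≤ ∑ i, lam i * b i := by
  constructor
  · rintro ⟨x, hx, hxj⟩
    refine ⟨(polyOf_nonempty_iff α b).1 ⟨x, hx⟩, fun lam hlam hsum => ?_⟩
    rw [dotE_eq_toDual] at hxj
    simpa [hsum, hxj] using dual_sum_smul_le ((mem_polyOf_iff_toDual α b).1 hx) hlam
  · rintro ⟨hdep, hcomb⟩
    obtain ⟨f, hf, hfj⟩ := exists_dual_le_and_eq_of_forall_nonneg hdep hcomb
    obtain ⟨x, rfl⟩ := (toDual ℝ (Euc n)).surjective f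
    exact ⟨x, (mem_polyOf_iff_toDual α b).2 hf, by rw [dotE_eq_toDual, hfj]⟩

theorem nonneg_of_minimalDep (hmin : ∀ lam, MinimalDep α lam → 0 ≤ ∑ i, lam i * b i)
    {lam : Fin m → ℝ} (hlam : 0 ≤ lam) (hdep : ∑ i, lam i • α i = 0) :
    0 ≤ ∑ i, lam i * b i := by
  induction lam using Function.support_induction with
  | h lam ih =>
  by_cases hzero : lam = 0
  · simp [hzero]
  by_cases hminimal : MinimalDep α lam
  · exact hmin lam hminimal
  obtain ⟨mu, hmu, hmudep, hmu₀, hss⟩ : ∃ mu : Fin m → ℝ, 0 ≤ mu ∧ ∑ i, mu i • α i = 0 ∧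
      mu ≠ 0 ∧ support mu ⊂ support lam := by
    by_contra! h
    exact hminimal ⟨hlam, hdep, hzero, fun mu h₁ h₂ h₃ hsub =>
      by_contra fun hne => h mu h₁ h₂ h₃ (hsub.ssubset_of_ne hne)⟩
  obtain ⟨t, ht, hnonneg, hss'⟩ := exists_nonneg_sub_smul_support_ssubset hlam hss.subset
    (Pi.lt_def.1 (lt_of_le_of_ne hmu (Ne.symm hmu₀))).2
  have hdep' : ∑ i, (lam - t • mu) i • α i = 0 := by
    simp only [Pi.sub_apply, Pi.smul_apply, smul_eq_mul, sub_smul, mul_smul,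
      Finset.sum_sub_distrib, ← Finset.smul_sum, hdep, hmudep, smul_zero, sub_zero]
  have hsplit : ∑ i, lam i * b i = ∑ i, (lam - t • mu) i * b i + t * ∑ i, mu i * b i := by
    simp only [Pi.sub_apply, Pi.smul_apply, smul_eq_mul, sub_mul, mul_assoc,
      Finset.sum_sub_distrib, ← Finset.mul_sum, sub_add_cancel]
  rw [hsplit]
  exact add_nonneg (ih _ hss' hnonneg hdep') (mul_nonneg ht (ih mu hss hmu hmudep))

theorem le_of_minimalComb
    (hdep : ∀ lam : Fin m → ℝ, 0 ≤ lam → ∑ i, lam i • α i = 0 → 0 ≤ ∑ i, lam i * b i)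
    (hmin : ∀ j lam, MinimalComb α j lam → b j ≤ ∑ i, lam i * b i) {j : Fin m}
    {lam : Fin m → ℝ} (hlam : 0 ≤ lam) (hcomb : ∑ i, lam i • α i = α j) :
    b j ≤ ∑ i, lam i * b i := by
  induction lam using Function.support_induction with
  | h lam ih =>
  by_cases hminimal : MinimalComb α j lam
  · exact hmin j lam hminimal
  obtain ⟨mu, hmu, hmucomb, hss⟩ : ∃ mu : Fin m → ℝ, 0 ≤ mu ∧ ∑ i, mu i • α i = α j ∧
      support mu ⊂ support lam := by
    by_contra! h
    exact hminimal ⟨hlam, hcomb, fun mu h₁ h₂ hsub =>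
      by_contra fun hne => h mu h₁ h₂ (hsub.ssubset_of_ne hne)⟩
  have hmub := ih mu hss hmu hmucomb
  by_cases hle : mu ≤ lam
  · have := hdep (lam - mu) (sub_nonneg.2 hle) (by
      simp only [Pi.sub_apply, sub_smul, Finset.sum_sub_distrib, hcomb, hmucomb, sub_self])
    simp only [Pi.sub_apply, sub_mul, Finset.sum_sub_distrib, sub_nonneg] at this
    linarith
  obtain ⟨i, hi⟩ : ∃ i, 0 < (mu - lam) i := by
    simpa [Pi.le_def] using hle
  have hsupp : support (mu - lam) ⊆ support lam := fun i hi => by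
    by_contra h
    have : mu i = 0 := by_contra fun hmui => h (hss.subset hmui)
    simp_all
  obtain ⟨t, ht, hnonneg, hss'⟩ := exists_nonneg_sub_smul_support_ssubset hlam hsupp ⟨i, hi⟩
  have hcomb' : ∑ i, (lam - t • (mu - lam)) i • α i = α j := by
    simp only [Pi.sub_apply, Pi.smul_apply, smul_eq_mul, sub_smul, mul_smul,
      Finset.sum_sub_distrib, ← Finset.smul_sum, hcomb, hmucomb, sub_self, smul_zero, sub_zero]
  have := ih _ hss' hnonneg hcomb'
  simp only [Pi.sub_apply, Pi.smul_apply, smul_eq_mul, sub_mul, mul_assoc, Finset.sum_sub_distrib,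
    ← Finset.mul_sum] at this
  nlinarith [mul_nonneg ht (sub_nonneg.2 hmub)]

theorem realizes_iff_forall_dep_and_comb :
    ((polyOf α b).Nonempty ∧ ∀ j, ∃ x ∈ polyOf α b, dotE (α j) x = b j) ↔
      (∀ lam : Fin m → ℝ, 0 ≤ lam → ∑ i, lam i • α i = 0 → 0 ≤ ∑ i, lam i * b i) ∧
      ∀ lam : Fin m → ℝ, 0 ≤ lam → ∀ j, ∑ i, lam i • α i = α j → b j ≤ ∑ i, lam i * b i := by
  simp only [polyOf_nonempty_iff, exists_mem_polyOf_dotE_eq_iff]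
  exact ⟨fun ⟨hdep, hcomb⟩ => ⟨hdep, fun lam hlam j => (hcomb j).2 lam hlam⟩,
    fun ⟨hdep, hcomb⟩ => ⟨hdep, fun j => ⟨hdep, fun lam hlam => hcomb lam hlam j⟩⟩⟩

theorem forall_dep_and_comb_iff_forall_minimal :
    ((∀ lam : Fin m → ℝ, 0 ≤ lam → ∑ i, lam i • α i = 0 → 0 ≤ ∑ i, lam i * b i) ∧
      ∀ lam : Fin m → ℝ, 0 ≤ lam → ∀ j, ∑ i, lam i • α i = α j → b j ≤ ∑ i, lam i * b i) ↔
    (∀ lam, MinimalDep α lam → 0 ≤ ∑ i, lam i * b i) ∧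
      ∀ j lam, MinimalComb α j lam → b j ≤ ∑ i, lam i * b i := by
  refine ⟨fun ⟨hdep, hcomb⟩ => ⟨fun lam h => hdep lam h.1 h.2.1,
    fun j lam h => hcomb lam h.1 j h.2.1⟩, fun ⟨hdep, hcomb⟩ => ?_⟩
  have hdep' := fun lam (hlam : 0 ≤ lam) => nonneg_of_minimalDep α b hdep hlam
  exact ⟨hdep', fun lam hlam j => le_of_minimalComb α b hdep' hcomb hlam⟩

end Polytope

theorem delzant_stmt_13_general {n m : ℕ} (α : Fin m → Euc n) (b : Fin m → ℝ) :
    (((polyOf α b).Nonempty ∧ ∀ j, ∃ x ∈ polyOf α b, dotE (α j) x = b j) ↔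
      ((∀ lam : Fin m → ℝ, (∀ i, 0 ≤ lam i) → (∑ i, lam i • α i) = 0 →
          0 ≤ ∑ i, lam i * b i) ∧
       (∀ lam : Fin m → ℝ, (∀ i, 0 ≤ lam i) → ∀ j, (∑ i, lam i • α i) = α j →
          b j ≤ ∑ i, lam i * b i))) ∧
    (((polyOf α b).Nonempty ∧ ∀ j, ∃ x ∈ polyOf α b, dotE (α j) x = b j) ↔
      ((∀ lam : Fin m → ℝ, MinimalDep α lam → 0 ≤ ∑ i, lam i * b i) ∧
       (∀ (j : Fin m) (lam : Fin m → ℝ), MinimalComb α j lam →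
          b j ≤ ∑ i, lam i * b i))) := by
  have hrealizes := realizes_iff_forall_dep_and_comb α b
  exact ⟨hrealizes, hrealizes.trans (forall_dep_and_comb_iff_forall_minimal α b)⟩

/-- Let `α 1, …, α m` be nonzero vectors positively spanning `(ℝⁿ)*` and
`b ∈ ℝ^m`.  Then `b` is the vector of values of the support function of the polytope `P(b)`
at the `α i` (i.e. `P(b)` is nonempty and each `b j` is attained as `⟨α j, x⟩` for some
`x ∈ P(b)`) if and only if: (1) `Σ λ i b i ≥ 0` for every nonnegative dependence
`Σ λ i α i = 0`, and (2) `Σ λ i b i ≥ b j` for every nonnegative combination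
`Σ λ i α i = α j`.  Moreover the same holds imposing only the dependences and combinations
with minimal support. -/
theorem delzant_stmt_13 {n m : ℕ} (α : Fin m → Euc n) (hα : ∀ i, α i ≠ 0)
    (hspan : ∀ y : Euc n, ∃ c : Fin m → ℝ, (∀ i, 0 ≤ c i) ∧ y = ∑ i, c i • α i)
    (b : Fin m → ℝ) :
    (((polyOf α b).Nonempty ∧ ∀ j, ∃ x ∈ polyOf α b, dotE (α j) x = b j) ↔
      ((∀ lam : Fin m → ℝ, (∀ i, 0 ≤ lam i) → (∑ i, lam i • α i) = 0 →
          0 ≤ ∑ i, lam i * b i) ∧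
       (∀ lam : Fin m → ℝ, (∀ i, 0 ≤ lam i) → ∀ j, (∑ i, lam i • α i) = α j →
          b j ≤ ∑ i, lam i * b i))) ∧
    (((polyOf α b).Nonempty ∧ ∀ j, ∃ x ∈ polyOf α b, dotE (α j) x = b j) ↔
      ((∀ lam : Fin m → ℝ, MinimalDep α lam → 0 ≤ ∑ i, lam i * b i) ∧
       (∀ (j : Fin m) (lam : Fin m → ℝ), MinimalComb α j lam →
          b j ≤ ∑ i, lam i * b i))) :=
  delzant_stmt_13_general α b
end
end
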